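/- arXiv:1405.5405 — 2 statements merged into one kernel-verified Lean document; each statement's English description precedes it below -/
import Mathlib

section
/- Energy identity for the dG(0) scheme (Theorem 4.1, case l = 0): Let (U_{1,n}, U_{2,n}) be the dG(0) approximation. Then, with W_{n,j} = U_{1,n} − U_{1,j} and the backward difference ∂_n X_n = (X_n − X_{n-1})/k_n, the following identity holds: η_N ‖A^{1/2} U_{1,N}‖² + ρ ‖U_{2,N}‖² + Σ_{n=1}^N k_n ( −∂_n η_n ‖A^{1/2} U_{1,n-1}‖² + k_n η_n ‖A^{1/2} ∂_n U_{1,n}‖² ) + Σ_{n=2}^N Σ_{j=1}^{n-1} ω_{n,j} ( (‖A^{1/2} W_{n,j}‖² − ‖A^{1/2} W_{n-1,j}‖²)/k_n + k_n ‖A^{1/2} ∂_n W_{n,j}‖² ) + ρ Σ_{n=1}^N ‖U_{2,n} − U_{2,n-1}‖² = ‖A^{1/2} u_0‖² + ρ ‖v_0‖² + 2 Σ_{n=1}^N k_n η_n ⟨A f̄_{1,n}, U_{1,n}⟩ + 2 Σ_{n=1}^N k_n ⟨f̄_{2,n}, U_{2,n}⟩ + 2 Σ_{n=2}^N Σ_{j=1}^{n-1}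 ω_{n,j} ⟨A f̄_{1,n}, U_{1,n} − U_{1,j}⟩. -/
open MeasureTheory Finset
open scoped RealInnerProductSpace

/-- The time step `k_n = t_n − t_{n-1}`. -/
noncomputable def kstep (tp : ℕ → ℝ) (n : ℕ) : ℝ := tp n - tp (n - 1)

/-- The resolvent function `η(t) = 1 − ∫_0^t β(s) ds`. -/
noncomputable def etaFun (β : ℝ → ℝ) (t : ℝ) : ℝ := 1 - ∫ s in (0:ℝ)..t, β s

/-- The interval averages `η_n = (1/k_n) ∫_{I_n} η(t) dt`, with `η_0 = 1`. -/
noncomputable def etaAvg (β : ℝ → ℝ) (tp : ℕ → ℝ) (n : ℕ) : ℝ :=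
  if n = 0 then 1 else (kstep tp n)⁻¹ * ∫ t in (tp (n - 1))..(tp n), etaFun β t

/-- The quadrature weights
`ω_{n,j} = ∫_{I_n} ∫_{t_{j-1}}^{min(t_j, t)} β(t − s) ds dt` for `1 ≤ j ≤ n ≤ N`. -/
noncomputable def qweight (β : ℝ → ℝ) (tp : ℕ → ℝ) (n j : ℕ) : ℝ :=
  ∫ t in (tp (n - 1))..(tp n), ∫ s in (tp (j - 1))..(min (tp j) t), β (t - s)

/-- The interval averages of the data, `f̄_n = (1/k_n) ∫_{I_n} f(t) dt`. -/
noncomputable def iavg {H : Type*} [NormedAddCommGroup H] [NormedSpace ℝ H]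
    (tp : ℕ → ℝ) (f : ℝ → H) (n : ℕ) : H :=
  (kstep tp n)⁻¹ • ∫ t in (tp (n - 1))..(tp n), f t

/-- Energy identity for the dG(0) scheme (Theorem 4.1, case `l = 0`). -/
theorem dG0_energy_identity
    {H : Type*} [NormedAddCommGroup H] [InnerProductSpace ℝ H] [CompleteSpace H]
    (N : ℕ) (hN : 1 ≤ N) (tp : ℕ → ℝ) (ht0 : tp 0 = 0)
    (htmono : ∀ n < N, tp n < tp (n + 1))
    (β : ℝ → ℝ) (γ : ℝ) (hγ0 : 0 < γ) (hγ1 : γ < 1)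
    (hβnonneg : ∀ s ∈ Set.Ioi (0:ℝ), 0 ≤ β s)
    (hβmono : AntitoneOn β (Set.Ioi 0))
    (hβint : LocallyIntegrableOn β (Set.Ioi 0))
    (hβγ : ∫ s in Set.Ioi (0:ℝ), β s = γ)
    (ρ : ℝ) (hρ : 0 < ρ)
    (A sqrtA : H →L[ℝ] H)
    (hAsym : ∀ x y : H, ⟪A x, y⟫ = ⟪x, A y⟫)
    (hApos : ∃ c > 0, ∀ x : H, c * ‖x‖ ^ 2 ≤ ⟪A x, x⟫)
    (hsqrtAsym : ∀ x y : H, ⟪sqrtA x, y⟫ = ⟪x, sqrtA y⟫)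
    (hsqrtApos : ∀ x : H, 0 ≤ ⟪sqrtA x, x⟫)
    (hsqrtA : ∀ x : H, sqrtA (sqrtA x) = A x)
    (u0 v0 : H) (f1 f2 : ℝ → H)
    (hf1 : IntegrableOn f1 (Set.Icc 0 (tp N)))
    (hf2 : IntegrableOn f2 (Set.Icc 0 (tp N)))
    (U1 U2 : ℕ → H) (hU10 : U1 0 = u0) (hU20 : U2 0 = v0)
    (hscheme1 : ∀ n : ℕ, 1 ≤ n → n ≤ N →
      U1 n - U1 (n - 1) = kstep tp n • U2 n + kstep tp n • iavg tp f1 n)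
    (hscheme2 : ∀ n : ℕ, 1 ≤ n → n ≤ N →
      ρ • (U2 n - U2 (n - 1)) + (kstep tp n - qweight β tp n n) • A (U1 n)
          - ∑ j ∈ Finset.Ico 1 n, qweight β tp n j • A (U1 j)
        = kstep tp n • iavg tp f2 n) :
    etaAvg β tp N * ‖sqrtA (U1 N)‖ ^ 2 + ρ * ‖U2 N‖ ^ 2
      + ∑ n ∈ Finset.Icc 1 N, kstep tp n *
          (-((etaAvg β tp n - etaAvg β tp (n - 1)) / kstep tp n) * ‖sqrtA (U1 (n - 1))‖ ^ 2
            + kstep tp n * etaAvg β tp n *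
                ‖sqrtA ((kstep tp n)⁻¹ • (U1 n - U1 (n - 1)))‖ ^ 2)
      + ∑ n ∈ Finset.Icc 2 N, ∑ j ∈ Finset.Ico 1 n, qweight β tp n j *
          ((‖sqrtA (U1 n - U1 j)‖ ^ 2 - ‖sqrtA (U1 (n - 1) - U1 j)‖ ^ 2) / kstep tp n
            + kstep tp n *
                ‖sqrtA ((kstep tp n)⁻¹ • ((U1 n - U1 j) - (U1 (n - 1) - U1 j)))‖ ^ 2)
      + ρ * ∑ n ∈ Finset.Icc 1 N, ‖U2 n - U2 (n - 1)‖ ^ 2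
    = ‖sqrtA u0‖ ^ 2 + ρ * ‖v0‖ ^ 2
      + 2 * ∑ n ∈ Finset.Icc 1 N, kstep tp n * etaAvg β tp n * ⟪A (iavg tp f1 n), U1 n⟫
      + 2 * ∑ n ∈ Finset.Icc 1 N, kstep tp n * ⟪iavg tp f2 n, U2 n⟫
      + 2 * ∑ n ∈ Finset.Icc 2 N, ∑ j ∈ Finset.Ico 1 n,
          qweight β tp n j * ⟪A (iavg tp f1 n), U1 n - U1 j⟫ := by
  classical
  -- partition monotonicity
  have htle : ∀ i j : ℕ, i ≤ j → j ≤ N → tp i ≤ tp j := by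
    intro i j hij hjN
    induction j with
    | zero => interval_cases i; rfl
    | succ m ih =>
      rcases Nat.lt_or_ge i (m + 1) with h | h
      · exact (ih (Nat.lt_succ_iff.mp h) (le_trans (Nat.le_succ m) hjN)).trans
          (htmono m (by omega)).le
      · have : i = m + 1 := le_antisymm hij h
        simp [this]
  have htnn : ∀ j : ℕ, j ≤ N → 0 ≤ tp j := by
    intro j hj
    have := htle 0 j (Nat.zero_le _) hj
    linarith [this, ht0.le, ht0.ge]
  have hk : ∀ n : ℕ, 1 ≤ n → n ≤ N → 0 < kstep tp n := by
    intro n h1 hn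
    have h := htmono (n - 1) (by omega)
    have hh : n - 1 + 1 = n := by omega
    rw [hh] at h
    simpa [kstep] using sub_pos.mpr h
  -- β is integrable on (0,∞)
  have hβI : MeasureTheory.IntegrableOn β (Set.Ioi (0:ℝ)) := by
    by_contra h
    rw [MeasureTheory.integral_undef h] at hβγ
    linarith
  set Φ : ℝ → ℝ := fun x => ∫ u in (0:ℝ)..x, β u with hΦdef
  have hβii : ∀ a b : ℝ, 0 ≤ a → a ≤ b → IntervalIntegrable β volume a b := by
    intro a b ha hab
    rw [intervalIntegrable_iff, Set.uIoc_of_le hab]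
    exact hβI.mono_set (fun x hx => lt_of_le_of_lt ha hx.1)
  have hΦ0 : Φ 0 = 0 := by simp [hΦdef]
  have hΦadd : ∀ x y : ℝ, 0 ≤ x → x ≤ y → Φ y - Φ x = ∫ u in x..y, β u := by
    intro x y hx hxy
    have h1 : IntervalIntegrable β volume 0 x := hβii 0 x le_rfl hx
    have h2 : IntervalIntegrable β volume x y := hβii x y hx hxy
    have h3 := intervalIntegral.integral_add_adjacent_intervals h1 h2
    simp only [hΦdef]
    linarith [h3]
  have hΦmono : ∀ x y : ℝ, 0 ≤ x → x ≤ y → Φ x ≤ Φ y := by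
    intro x y hx hxy
    have h := hΦadd x y hx hxy
    have h0 : ∀ᵐ s : ℝ, s ≠ (0:ℝ) := by
      rw [MeasureTheory.ae_iff]
      simpa using Real.volume_singleton (a := (0:ℝ))
    have h2 : 0 ≤ ∫ u in x..y, β u := by
      apply intervalIntegral.integral_nonneg_of_ae_restrict hxy
      filter_upwards [MeasureTheory.ae_restrict_of_ae h0,
        MeasureTheory.ae_restrict_mem measurableSet_Icc] with s hs hmem
      exact hβnonneg s (lt_of_le_of_ne (hx.trans hmem.1) (Ne.symm hs))
    linarith
  have hshift : ∀ t a b : ℝ, 0 ≤ t - b → a ≤ b →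
      (∫ s in a..b, β (t - s)) = Φ (t - a) - Φ (t - b) := by
    intro t a b htb hab
    rw [intervalIntegral.integral_comp_sub_left (fun u => β u) t]
    exact (hΦadd (t - b) (t - a) htb (by linarith)).symm
  -- Lemma A : k_n η_n = k_n - ω_{n,n} - ∑_{j<n} ω_{n,j}
  have lemA : ∀ n : ℕ, 1 ≤ n → n ≤ N →
      kstep tp n * etaAvg β tp n
        = kstep tp n - qweight β tp n n - ∑ j ∈ Finset.Ico 1 n, qweight β tp n j := by
    intro n h1 hn
    have hcd : tp (n - 1) ≤ tp n := htle (n - 1) n (Nat.sub_le n 1) hn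
    have hc0 : 0 ≤ tp (n - 1) := htnn (n - 1) (le_trans (Nat.sub_le n 1) hn)
    have hIm : ∀ e : ℝ, e ≤ tp (n - 1) →
        IntervalIntegrable (fun t => Φ (t - e)) volume (tp (n - 1)) (tp n) := by
      intro e he
      apply MonotoneOn.intervalIntegrable
      intro x hx y hy hxy
      rw [Set.uIcc_of_le hcd] at hx hy
      exact hΦmono _ _ (by linarith [hx.1]) (by linarith)
    have hImΦ : IntervalIntegrable (fun t => Φ t) volume (tp (n - 1)) (tp n) := by
      simpa using hIm 0 hc0
    have hqnn : qweight β tp n n = ∫ t in (tp (n - 1))..(tp n), Φ (t - tp (n - 1)) := by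
      simp only [qweight]
      apply intervalIntegral.integral_congr
      intro t ht
      rw [Set.uIcc_of_le hcd] at ht
      dsimp only
      rw [min_eq_right ht.2]
      have h := hshift t (tp (n - 1)) t (by linarith) ht.1
      simpa [hΦ0] using h
    have hqj : ∀ j ∈ Finset.Ico 1 n, qweight β tp n j
        = ∫ t in (tp (n - 1))..(tp n), (Φ (t - tp (j - 1)) - Φ (t - tp j)) := by
      intro j hj
      rw [Finset.mem_Ico] at hj
      have hj1 : tp j ≤ tp (n - 1) := htle j (n - 1) (by omega) (by omega)
      have hj0 : tp (j - 1) ≤ tp j := htle (j - 1) j (Nat.sub_le j 1) (by omega)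
      simp only [qweight]
      apply intervalIntegral.integral_congr
      intro t ht
      rw [Set.uIcc_of_le hcd] at ht
      dsimp only
      rw [min_eq_left (by linarith [ht.1])]
      exact hshift t (tp (j - 1)) (tp j) (by linarith [ht.1]) hj0
    have hintj : ∀ j ∈ Finset.Ico 1 n,
        IntervalIntegrable (fun t => Φ (t - tp (j - 1)) - Φ (t - tp j)) volume
          (tp (n - 1)) (tp n) := by
      intro j hj
      rw [Finset.mem_Ico] at hj
      exact (hIm (tp (j - 1)) (htle (j - 1) (n - 1) (by omega) (by omega))).sub
        (hIm (tp j) (htle j (n - 1) (by omega) (by omega)))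
    have hsumq : ∑ j ∈ Finset.Ico 1 n, qweight β tp n j
        = ∫ t in (tp (n - 1))..(tp n), (Φ t - Φ (t - tp (n - 1))) := by
      rw [Finset.sum_congr rfl hqj, ← intervalIntegral.integral_finset_sum hintj]
      have hpt : ∀ t : ℝ, ∑ j ∈ Finset.Ico 1 n, (Φ (t - tp (j - 1)) - Φ (t - tp j))
          = Φ t - Φ (t - tp (n - 1)) := by
        intro t
        rw [Finset.sum_Ico_eq_sum_range]
        have h2 : ∀ i, Φ (t - tp (1 + i - 1)) - Φ (t - tp (1 + i))
            = (fun m => Φ (t - tp m)) i - (fun m => Φ (t - tp m)) (i + 1) := by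
          intro i
          simp only
          rw [show 1 + i - 1 = i from by omega, show 1 + i = i + 1 from by omega]
        rw [Finset.sum_congr rfl fun i _ => h2 i, Finset.sum_range_sub' (fun m => Φ (t - tp m))]
        simp [ht0]
      simp only [hpt]
    have hkne : kstep tp n ≠ 0 := ne_of_gt (hk n h1 hn)
    have hηn : kstep tp n * etaAvg β tp n
        = (tp n - tp (n - 1)) - ∫ t in (tp (n - 1))..(tp n), Φ t := by
      have hn0 : n ≠ 0 := by omega
      rw [etaAvg, if_neg hn0, ← mul_assoc, mul_inv_cancel₀ hkne, one_mul]
      have heq : ∀ t : ℝ, etaFun β t = 1 - Φ t := fun t => rfl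
      rw [intervalIntegral.integral_congr (g := fun t => 1 - Φ t) (fun t _ => heq t)]
      rw [intervalIntegral.integral_sub intervalIntegrable_const hImΦ]
      simp
    have hsub : (∫ t in (tp (n - 1))..(tp n), (Φ t - Φ (t - tp (n - 1))))
        = (∫ t in (tp (n - 1))..(tp n), Φ t)
          - ∫ t in (tp (n - 1))..(tp n), Φ (t - tp (n - 1)) :=
      intervalIntegral.integral_sub hImΦ (hIm (tp (n - 1)) le_rfl)
    have hkval : kstep tp n = tp n - tp (n - 1) := rfl
    rw [hηn, hqnn, hsumq, hsub, hkval]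
    ring
  -- inner-product algebra
  have hnsq : ∀ x : H, ‖sqrtA x‖ ^ 2 = ⟪A x, x⟫ := by
    intro x
    rw [← real_inner_self_eq_norm_sq, ← hsqrtA x]
    exact (hsqrtAsym (sqrtA x) x).symm
  have hAcomm : ∀ x y : H, ⟪A x, y⟫ = ⟪A y, x⟫ := by
    intro x y
    rw [hAsym]
    exact real_inner_comm _ _
  have pol : ∀ x y : H, ‖sqrtA x‖ ^ 2 - ‖sqrtA y‖ ^ 2 + ‖sqrtA (x - y)‖ ^ 2
      = 2 * ⟪A x, x - y⟫ := by
    intro x y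
    have h1 : ‖sqrtA (x - y)‖ ^ 2 = ⟪A x, x⟫ - ⟪A x, y⟫ - ⟪A y, x⟫ + ⟪A y, y⟫ := by
      rw [hnsq, map_sub, inner_sub_left, inner_sub_right, inner_sub_right]
      ring
    have h2 := hAcomm x y
    rw [hnsq, hnsq, inner_sub_right]
    linarith
  have polQ : ∀ a b : H, ‖a‖ ^ 2 - ‖b‖ ^ 2 + ‖a - b‖ ^ 2 = 2 * ⟪a - b, a⟫ := by
    intro a b
    have h1 := norm_sub_sq_real a b
    have h2 : ⟪a - b, a⟫ = ‖a‖ ^ 2 - ⟪a, b⟫ := by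
      rw [inner_sub_left, real_inner_self_eq_norm_sq, real_inner_comm b a]
    linarith
  have hsm : ∀ (c : ℝ) (z : H), ‖sqrtA (c • z)‖ ^ 2 = c ^ 2 * ‖sqrtA z‖ ^ 2 := by
    intro c z
    rw [_root_.map_smul, norm_smul]
    simp [mul_pow, sq_abs, Real.norm_eq_abs]
  -- the per-step energy identity
  have step : ∀ n ∈ Finset.Icc 1 N,
      kstep tp n *
          (-((etaAvg β tp n - etaAvg β tp (n - 1)) / kstep tp n) * ‖sqrtA (U1 (n - 1))‖ ^ 2
            + kstep tp n * etaAvg β tp n *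
                ‖sqrtA ((kstep tp n)⁻¹ • (U1 n - U1 (n - 1)))‖ ^ 2)
        + (∑ j ∈ Finset.Ico 1 n, qweight β tp n j *
            ((‖sqrtA (U1 n - U1 j)‖ ^ 2 - ‖sqrtA (U1 (n - 1) - U1 j)‖ ^ 2) / kstep tp n
              + kstep tp n *
                  ‖sqrtA ((kstep tp n)⁻¹ • ((U1 n - U1 j) - (U1 (n - 1) - U1 j)))‖ ^ 2))
        + ρ * ‖U2 n - U2 (n - 1)‖ ^ 2
        - (2 * (kstep tp n * etaAvg β tp n * ⟪A (iavg tp f1 n), U1 n⟫)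
            + 2 * (kstep tp n * ⟪iavg tp f2 n, U2 n⟫)
            + 2 * ∑ j ∈ Finset.Ico 1 n, qweight β tp n j * ⟪A (iavg tp f1 n), U1 n - U1 j⟫)
      = (etaAvg β tp (n - 1) * ‖sqrtA (U1 (n - 1))‖ ^ 2 + ρ * ‖U2 (n - 1)‖ ^ 2)
          - (etaAvg β tp n * ‖sqrtA (U1 n)‖ ^ 2 + ρ * ‖U2 n‖ ^ 2) := by
    intro n hn'
    rw [Finset.mem_Icc] at hn'
    obtain ⟨h1, hn⟩ := hn'
    have hk0 : 0 < kstep tp n := hk n h1 hn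
    have hkne : kstep tp n ≠ 0 := ne_of_gt hk0
    have hs1 := hscheme1 n h1 hn
    have hs2 := hscheme2 n h1 hn
    have hA1 := lemA n h1 hn
    have hrep : ∀ w : H, ⟪w, U1 n - U1 (n - 1)⟫
        = kstep tp n * ⟪w, U2 n⟫ + kstep tp n * ⟪w, iavg tp f1 n⟫ := by
      intro w
      rw [hs1, inner_add_right, real_inner_smul_right, real_inner_smul_right]
    have raw : ρ * ⟪U2 n - U2 (n - 1), U2 n⟫
        + (kstep tp n - qweight β tp n n) * ⟪A (U1 n), U2 n⟫
        - ∑ j ∈ Finset.Ico 1 n, qweight β tp n j * ⟪A (U1 j), U2 n⟫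
        = kstep tp n * ⟪iavg tp f2 n, U2 n⟫ := by
      have h : ⟪ρ • (U2 n - U2 (n - 1)) + (kstep tp n - qweight β tp n n) • A (U1 n)
          - ∑ j ∈ Finset.Ico 1 n, qweight β tp n j • A (U1 j), U2 n⟫
          = ⟪kstep tp n • iavg tp f2 n, U2 n⟫ := by rw [hs2]
      simpa only [inner_sub_left, inner_add_left, sum_inner, real_inner_smul_left] using h
    have hSa : (∑ j ∈ Finset.Ico 1 n,
          qweight β tp n j * (⟪A (U1 n), U2 n⟫ - ⟪A (U1 j), U2 n⟫))
        = (∑ j ∈ Finset.Ico 1 n, qweight β tp n j) * ⟪A (U1 n), U2 n⟫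
          - ∑ j ∈ Finset.Ico 1 n, qweight β tp n j * ⟪A (U1 j), U2 n⟫ := by
      rw [Finset.sum_mul, ← Finset.sum_sub_distrib]
      exact Finset.sum_congr rfl fun j _ => by ring
    have hpP : ‖sqrtA (U1 n)‖ ^ 2 - ‖sqrtA (U1 (n - 1))‖ ^ 2
        + ‖sqrtA (U1 n - U1 (n - 1))‖ ^ 2
        = 2 * (kstep tp n * ⟪A (U1 n), U2 n⟫
            + kstep tp n * ⟪A (iavg tp f1 n), U1 n⟫) := by
      have h := pol (U1 n) (U1 (n - 1))
      rw [hrep (A (U1 n)), hAcomm (U1 n) (iavg tp f1 n)] at h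
      exact h
    have hpQ : ‖U2 n‖ ^ 2 - ‖U2 (n - 1)‖ ^ 2 + ‖U2 n - U2 (n - 1)‖ ^ 2
        = 2 * ⟪U2 n - U2 (n - 1), U2 n⟫ := polQ _ _
    -- rewrite the D2 sum
    have hD2 : (∑ j ∈ Finset.Ico 1 n, qweight β tp n j *
          ((‖sqrtA (U1 n - U1 j)‖ ^ 2 - ‖sqrtA (U1 (n - 1) - U1 j)‖ ^ 2) / kstep tp n
            + kstep tp n *
                ‖sqrtA ((kstep tp n)⁻¹ • ((U1 n - U1 j) - (U1 (n - 1) - U1 j)))‖ ^ 2))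
        = 2 * (∑ j ∈ Finset.Ico 1 n,
              qweight β tp n j * (⟪A (U1 n), U2 n⟫ - ⟪A (U1 j), U2 n⟫))
          + 2 * (∑ j ∈ Finset.Ico 1 n,
              qweight β tp n j * ⟪A (iavg tp f1 n), U1 n - U1 j⟫) := by
      rw [Finset.mul_sum, Finset.mul_sum, ← Finset.sum_add_distrib]
      apply Finset.sum_congr rfl
      intro j hj
      have hW : (U1 n - U1 j) - (U1 (n - 1) - U1 j) = U1 n - U1 (n - 1) :=
        sub_sub_sub_cancel_right _ _ _
      have hp := pol (U1 n - U1 j) (U1 (n - 1) - U1 j)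
      rw [hW] at hp
      have hZ : ⟪A (U1 n - U1 j), U1 n - U1 (n - 1)⟫
          = kstep tp n * (⟪A (U1 n), U2 n⟫ - ⟪A (U1 j), U2 n⟫)
            + kstep tp n * ⟪A (iavg tp f1 n), U1 n - U1 j⟫ := by
        rw [hrep (A (U1 n - U1 j)), hAcomm (U1 n - U1 j) (iavg tp f1 n)]
        rw [map_sub, inner_sub_left]
      rw [hW, hsm]
      have hcomb : (‖sqrtA (U1 n - U1 j)‖ ^ 2 - ‖sqrtA (U1 (n - 1) - U1 j)‖ ^ 2) / kstep tp n
          + kstep tp n * (((kstep tp n)⁻¹) ^ 2 * ‖sqrtA (U1 n - U1 (n - 1))‖ ^ 2)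
          = (‖sqrtA (U1 n - U1 j)‖ ^ 2 - ‖sqrtA (U1 (n - 1) - U1 j)‖ ^ 2
              + ‖sqrtA (U1 n - U1 (n - 1))‖ ^ 2) / kstep tp n := by
        field_simp
      rw [hcomb, hp, hZ]
      field_simp
    rw [hsm, hD2]
    have hcomb2 : kstep tp n *
        (-((etaAvg β tp n - etaAvg β tp (n - 1)) / kstep tp n) * ‖sqrtA (U1 (n - 1))‖ ^ 2
          + kstep tp n * etaAvg β tp n *
              (((kstep tp n)⁻¹) ^ 2 * ‖sqrtA (U1 n - U1 (n - 1))‖ ^ 2))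
        = (etaAvg β tp (n - 1) - etaAvg β tp n) * ‖sqrtA (U1 (n - 1))‖ ^ 2
          + etaAvg β tp n * ‖sqrtA (U1 n - U1 (n - 1))‖ ^ 2 := by
      field_simp
      ring
    rw [hcomb2]
    linear_combination (etaAvg β tp n) * hpP + ρ * hpQ + 2 * raw + 2 * hSa
      + 2 * ⟪A (U1 n), U2 n⟫ * hA1
  -- telescoping
  have tele : ∀ f : ℕ → ℝ, ∑ n ∈ Finset.Icc 1 N, (f (n - 1) - f n) = f 0 - f N := by
    intro f
    rw [← Finset.Ico_add_one_right_eq_Icc, Finset.sum_Ico_eq_sum_range]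
    have h2 : ∀ i, f (1 + i - 1) - f (1 + i) = f i - f (i + 1) := by
      intro i
      congr 2 <;> omega
    rw [Finset.sum_congr rfl fun i _ => h2 i, Finset.sum_range_sub' f,
      show N + 1 - 1 = N from by omega]
  -- assemble
  have hIccsplit : Finset.Icc 1 N = insert 1 (Finset.Icc 2 N) := by
    ext x
    simp only [Finset.mem_Icc, Finset.mem_insert]
    omega
  have h1notin : (1 : ℕ) ∉ Finset.Icc 2 N := by simp
  have hD2ext : (∑ n ∈ Finset.Icc 2 N, ∑ j ∈ Finset.Ico 1 n, qweight β tp n j *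
          ((‖sqrtA (U1 n - U1 j)‖ ^ 2 - ‖sqrtA (U1 (n - 1) - U1 j)‖ ^ 2) / kstep tp n
            + kstep tp n *
                ‖sqrtA ((kstep tp n)⁻¹ • ((U1 n - U1 j) - (U1 (n - 1) - U1 j)))‖ ^ 2))
      = ∑ n ∈ Finset.Icc 1 N, ∑ j ∈ Finset.Ico 1 n, qweight β tp n j *
          ((‖sqrtA (U1 n - U1 j)‖ ^ 2 - ‖sqrtA (U1 (n - 1) - U1 j)‖ ^ 2) / kstep tp n
            + kstep tp n *
                ‖sqrtA ((kstep tp n)⁻¹ • ((U1 n - U1 j) - (U1 (n - 1) - U1 j)))‖ ^ 2) := by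
    rw [hIccsplit, Finset.sum_insert h1notin]
    simp
  have hS3ext : (∑ n ∈ Finset.Icc 2 N, ∑ j ∈ Finset.Ico 1 n,
          qweight β tp n j * ⟪A (iavg tp f1 n), U1 n - U1 j⟫)
      = ∑ n ∈ Finset.Icc 1 N, ∑ j ∈ Finset.Ico 1 n,
          qweight β tp n j * ⟪A (iavg tp f1 n), U1 n - U1 j⟫ := by
    rw [hIccsplit, Finset.sum_insert h1notin]
    simp
  have C0 := Finset.sum_congr rfl step
  have C1 := tele (fun m => etaAvg β tp m * ‖sqrtA (U1 m)‖ ^ 2 + ρ * ‖U2 m‖ ^ 2)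
  rw [C1] at C0
  have hη0 : etaAvg β tp 0 = 1 := by simp [etaAvg]
  rw [hη0, hU10, hU20, one_mul] at C0
  simp only [Finset.sum_add_distrib, Finset.sum_sub_distrib, ← Finset.mul_sum] at C0
  rw [hD2ext, hS3ext]
  linarith [C0]
end

section
/- Energy identity for the dG(0) scheme (Theorem 4.1, case l = −1): Let (U_{1,n}, U_{2,n}) be the dG(0) approximation. Then, with W_{n,j} = U_{1,n} − U_{1,j} and the backward difference ∂_n X_n = (X_n − X_{n-1})/k_n, the following identity holds: η_N ‖U_{1,N}‖² + ρ ‖A^{−1/2} U_{2,N}‖² + Σ_{n=1}^N k_n ( −∂_n η_n ‖U_{1,n-1}‖² + k_n η_n ‖∂_n U_{1,n}‖² ) + Σ_{n=2}^N Σ_{j=1}^{n-1} ω_{n,j} ( (‖W_{n,j}‖² − ‖W_{n-1,j}‖²)/k_n + k_n ‖∂_n W_{n,j}‖² ) + ρ Σ_{n=1}^N ‖A^{−1/2}(U_{2,n} − U_{2,n-1})‖² = ‖u_0‖² + ρ ‖A^{−1/2} v_0‖² + 2 Σ_{n=1}^N k_n η_n ⟨f̄_{1,n}, U_{1,n}⟩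 + 2 Σ_{n=1}^N k_n ⟨A^{−1/2} f̄_{2,n}, A^{−1/2} U_{2,n}⟩ + 2 Σ_{n=2}^N Σ_{j=1}^{n-1} ω_{n,j} ⟨f̄_{1,n}, U_{1,n} − U_{1,j}⟩. -/
open MeasureTheory Finset
open scoped RealInnerProductSpace

theorem Finset.sum_Icc_one_sub_pred {M : Type*} [AddCommGroup M] (g : ℕ → M) (N : ℕ) :
    ∑ n ∈ Icc 1 N, (g n - g (n - 1)) = g N - g 0 := by
  induction N with
  | zero => simp
  | succ N ih =>
    rw [sum_Icc_succ_top (by omega), ih, Nat.add_sub_cancel]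
    abel

theorem Finset.add_sum_Icc_eq_of_sub_pred_add {M : Type*} [AddCommGroup M] {E a b : ℕ → M}
    {N : ℕ} (h : ∀ n ∈ Icc 1 N, E n - E (n - 1) + a n = b n) :
    E N + ∑ n ∈ Icc 1 N, a n = E 0 + ∑ n ∈ Icc 1 N, b n := by
  have hE : ∑ n ∈ Icc 1 N, (b n - a n) = E N - E 0 := by
    rw [← sum_Icc_one_sub_pred]
    exact sum_congr rfl fun n hn => (eq_sub_of_add_eq (h n hn)).symm
  rw [sum_sub_distrib, sub_eq_sub_iff_add_eq_add] at hE
  rw [add_comm (E 0), hE]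

theorem Finset.sum_Icc_one_eq_sum_Icc_two {M : Type*} [AddCommMonoid M] (f : ℕ → ℕ → M)
    (N : ℕ) :
    ∑ n ∈ Icc 1 N, ∑ j ∈ Ico 1 n, f n j = ∑ n ∈ Icc 2 N, ∑ j ∈ Ico 1 n, f n j := by
  refine (sum_subset (Icc_subset_Icc_left one_le_two) fun n hn hn' => ?_).symm
  obtain rfl : n = 1 := by simp only [mem_Icc] at hn hn'; omega
  simp

section Energy

variable {H : Type*} [NormedAddCommGroup H] [InnerProductSpace ℝ H]

theorem two_mul_inner_self_sub_real (x y : H) :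
    2 * ⟪x, x - y⟫ = ‖x‖ ^ 2 - ‖y‖ ^ 2 + ‖x - y‖ ^ 2 := by
  rw [norm_sub_sq_real, inner_sub_right, real_inner_self_eq_norm_sq]
  ring

theorem mul_norm_inv_smul_sq (k : ℝ) (x : H) : k * ‖k⁻¹ • x‖ ^ 2 = ‖x‖ ^ 2 / k := by
  rcases eq_or_ne k 0 with rfl | hk
  · simp
  · rw [norm_smul, mul_pow, norm_inv, Real.norm_eq_abs, inv_pow, sq_abs]
    field_simp

theorem inner_invSqrt_apply_invSqrt_apply {A S B : H →L[ℝ] H}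
    (hS : ∀ x y, ⟪S x, y⟫ = ⟪x, S y⟫) (hSS : ∀ x, S (S x) = A x)
    (hSB : ∀ x, S (B x) = x) (hBS : ∀ x, B (S x) = x) (x y : H) :
    ⟪B (A x), B y⟫ = ⟪x, y⟫ := by
  rw [← hSS, hBS, hS, hSB]

theorem dG0_step_energy {ι : Type*} (s : Finset ι) (A B : H →L[ℝ] H)
    (hBA : ∀ x y, ⟪B (A x), B y⟫ = ⟪x, y⟫) {ρ k η η' c : ℝ} (ω : ι → ℝ) (hk : k ≠ 0)
    (hc : c = k * η + ∑ j ∈ s, ω j) {u u' v v' f g : H} (w : ι → H)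
    (h1 : u - u' = k • v + k • f)
    (h2 : ρ • (v - v') + c • A u - ∑ j ∈ s, ω j • A (w j) = k • g) :
    η * ‖u‖ ^ 2 + ρ * ‖B v‖ ^ 2 - (η' * ‖u'‖ ^ 2 + ρ * ‖B v'‖ ^ 2)
      + (k * (-((η - η') / k) * ‖u'‖ ^ 2 + k * η * ‖k⁻¹ • (u - u')‖ ^ 2)
        + ∑ j ∈ s, ω j * ((‖u - w j‖ ^ 2 - ‖u' - w j‖ ^ 2) / k
            + k * ‖k⁻¹ • ((u - w j) - (u' - w j))‖ ^ 2)
        + ρ * ‖B (v - v')‖ ^ 2)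
    = 2 * (k * η * ⟪f, u⟫) + 2 * (k * ⟪B g, B v⟫) + 2 * ∑ j ∈ s, ω j * ⟪f, u - w j⟫ := by
  have h_test : ρ * ⟪B v, B v - B v'⟫ + k * η * ⟪u, v⟫ + ∑ j ∈ s, ω j * ⟪u - w j, v⟫
      = k * ⟪B g, B v⟫ := by
    have h := congrArg (fun x => ⟪B x, B v⟫) h2
    simp only [map_sub, map_add, map_smul, map_sum, inner_sub_left, inner_add_left,
      real_inner_smul_left, sum_inner, hBA, hc, add_mul, sum_mul] at h
    simp only [inner_sub_left, inner_sub_right, mul_sub, sum_sub_distrib]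
    linear_combination h + ρ * real_inner_comm (B v) (B v')
  have h_incr (x : H) : ⟪x, u - u'⟫ = k * ⟪x, v⟫ + k * ⟪f, x⟫ := by
    rw [h1, inner_add_right, real_inner_smul_right, real_inner_smul_right, real_inner_comm x f]
  have h_hist (x y : H) : (‖x‖ ^ 2 - ‖y‖ ^ 2) / k + k * ‖k⁻¹ • (x - y)‖ ^ 2
      = 2 * ⟪x, x - y⟫ / k := by
    rw [mul_norm_inv_smul_sq, two_mul_inner_self_sub_real]
    ring
  have h_mem : k * (-((η - η') / k) * ‖u'‖ ^ 2 + k * η * ‖k⁻¹ • (u - u')‖ ^ 2)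
      = η * (2 * ⟪u, u - u'⟫) - η * ‖u‖ ^ 2 + η' * ‖u'‖ ^ 2 := by
    have h := mul_norm_inv_smul_sq k (u - u')
    rw [two_mul_inner_self_sub_real]
    linear_combination (norm := (field_simp; ring)) (k * η) * h
  have h_hist_sum : ∑ j ∈ s, ω j * ((‖u - w j‖ ^ 2 - ‖u' - w j‖ ^ 2) / k
      + k * ‖k⁻¹ • ((u - w j) - (u' - w j))‖ ^ 2)
      = 2 * ∑ j ∈ s, ω j * ⟪u - w j, v⟫ + 2 * ∑ j ∈ s, ω j * ⟪f, u - w j⟫ := by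
    simp only [mul_sum, ← sum_add_distrib]
    refine sum_congr rfl fun j _ => ?_
    rw [h_hist, sub_sub_sub_cancel_right, h_incr]
    field_simp
  rw [h_mem, h_hist_sum, map_sub]
  linear_combination 2 * h_test - ρ * two_mul_inner_self_sub_real (B v) (B v') + 2 * η * h_incr u

end Energy

theorem kstep_pos {tp : ℕ → ℝ} {n : ℕ} (hn : 1 ≤ n) (htp : StrictMonoOn tp (Set.Iic n)) :
    0 < kstep tp n :=
  sub_pos.2 (htp (Set.mem_Iic.2 (Nat.sub_le n 1)) (Set.mem_Iic.2 le_rfl) (by omega))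

section Quadrature

variable {β : ℝ → ℝ}

theorem intervalIntegrable_primitive_sub_min {a b c : ℝ} (hβ : IntervalIntegrable β volume 0 b)
    (ha : 0 ≤ a) (hab : a ≤ b) (hc : 0 ≤ c) :
    IntervalIntegrable (fun t => ∫ s in 0..t - min c t, β s) volume a b := by
  have hF := intervalIntegral.continuousOn_primitive_interval' hβ Set.left_mem_uIcc
  rw [Set.uIcc_of_le (ha.trans hab)] at hF
  refine (hF.comp (by fun_prop) fun t ht => ?_).intervalIntegrable
  rw [Set.uIcc_of_le hab] at ht
  have h_min := le_min hc (ha.trans ht.1)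
  constructor <;> linarith [min_le_right c t, ht.2]

theorem integral_comp_sub_eq_primitive_sub {b c d t : ℝ} (hβ : IntervalIntegrable β volume 0 b)
    (hc : 0 ≤ c) (hct : c ≤ t) (htb : t ≤ b) (hd : 0 ≤ d) :
    ∫ s in c..min d t, β (t - s)
      = (∫ s in 0..t - min c t, β s) - ∫ s in 0..t - min d t, β s := by
  have hβ_sub {x : ℝ} (hx₀ : 0 ≤ x) (hx : x ≤ b) : IntervalIntegrable β volume 0 x :=
    hβ.mono_set (Set.uIcc_subset_uIcc_left (Set.mem_uIcc_of_le hx₀ hx))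
  have h_min := le_min hd (hc.trans hct)
  rw [min_eq_left hct, intervalIntegral.integral_comp_sub_left,
    intervalIntegral.integral_interval_sub_left (hβ_sub (by linarith) (by linarith))
      (hβ_sub (by linarith [min_le_right d t]) (by linarith))]

theorem sum_qweight_eq_integral_primitive {tp : ℕ → ℝ} {n : ℕ} (ht0 : tp 0 = 0)
    (hmono : MonotoneOn tp (Set.Iic n)) (hβ : IntervalIntegrable β volume 0 (tp n)) :
    ∑ j ∈ Icc 1 n, qweight β tp n j = ∫ t in tp (n - 1)..tp n, ∫ s in 0..t, β s := by
  have htp_le {i m : ℕ} (him : i ≤ m) (hm : m ≤ n) : tp i ≤ tp m :=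
    hmono (Set.mem_Iic.2 (him.trans hm)) (Set.mem_Iic.2 hm) him
  have htp_nonneg {m : ℕ} (hm : m ≤ n) : 0 ≤ tp m := ht0 ▸ htp_le (Nat.zero_le m) hm
  have hab : tp (n - 1) ≤ tp n := htp_le (Nat.sub_le n 1) le_rfl
  have ha : 0 ≤ tp (n - 1) := htp_nonneg (Nat.sub_le n 1)
  -- the integrand of `qweight β tp n j` is `φ (j - 1) - φ j` on `I_n`, so the sum telescopes
  set φ : ℕ → ℝ → ℝ := fun m t => ∫ s in 0..t - min (tp m) t, β s
  set G : ℕ → ℝ := fun m => ∫ t in tp (n - 1)..tp n, φ m t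
  have hq (j : ℕ) (hj : j ∈ Icc 1 n) : qweight β tp n j = G (j - 1) - G j := by
    obtain ⟨hj₁, hjn⟩ := mem_Icc.1 hj
    rw [← intervalIntegral.integral_sub
      (intervalIntegrable_primitive_sub_min hβ ha hab (htp_nonneg (by omega)))
      (intervalIntegrable_primitive_sub_min hβ ha hab (htp_nonneg hjn))]
    refine intervalIntegral.integral_congr fun t ht => ?_
    rw [Set.uIcc_of_le hab] at ht
    exact integral_comp_sub_eq_primitive_sub hβ (htp_nonneg (by omega))
      ((htp_le (by omega : j - 1 ≤ n - 1) (Nat.sub_le n 1)).trans ht.1) ht.2 (htp_nonneg hjn)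
  have hG_zero : G 0 = ∫ t in tp (n - 1)..tp n, ∫ s in 0..t, β s := by
    refine intervalIntegral.integral_congr fun t ht => ?_
    rw [Set.uIcc_of_le hab] at ht
    simp only [φ, ht0, min_eq_left (ha.trans ht.1), sub_zero]
  have hG_top : G n = 0 := by
    refine (intervalIntegral.integral_congr fun t ht => ?_).trans intervalIntegral.integral_zero
    rw [Set.uIcc_of_le hab] at ht
    simp only [φ, min_eq_right ht.2, sub_self, intervalIntegral.integral_same]
  calc ∑ j ∈ Icc 1 n, qweight β tp n j = ∑ j ∈ Icc 1 n, (G (j - 1) - G j) := sum_congr rfl hq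
    _ = -∑ j ∈ Icc 1 n, (G j - G (j - 1)) := by simp only [← sum_neg_distrib, neg_sub]
    _ = ∫ t in tp (n - 1)..tp n, ∫ s in 0..t, β s := by
      rw [sum_Icc_one_sub_pred, neg_sub, hG_top, hG_zero, sub_zero]

theorem integral_etaFun_eq_kstep_sub_sum_qweight {tp : ℕ → ℝ} {n : ℕ} (ht0 : tp 0 = 0)
    (hmono : MonotoneOn tp (Set.Iic n)) (hβ : IntervalIntegrable β volume 0 (tp n)) :
    ∫ t in tp (n - 1)..tp n, etaFun β t = kstep tp n - ∑ j ∈ Icc 1 n, qweight β tp n j := by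
  have ha : 0 ≤ tp (n - 1) := ht0 ▸ hmono (Set.mem_Iic.2 (Nat.zero_le n))
    (Set.mem_Iic.2 (Nat.sub_le n 1)) (Nat.zero_le _)
  have hab := hmono (Set.mem_Iic.2 (Nat.sub_le n 1)) (Set.mem_Iic.2 le_rfl) (Nat.sub_le n 1)
  have hF : IntervalIntegrable (fun t => ∫ s in 0..t, β s) volume (tp (n - 1)) (tp n) :=
    (intervalIntegral.continuousOn_primitive_interval' hβ
      Set.left_mem_uIcc).intervalIntegrable.mono_set
        (Set.uIcc_subset_uIcc (Set.mem_uIcc_of_le ha hab) Set.right_mem_uIcc)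
  unfold etaFun
  rw [sum_qweight_eq_integral_primitive ht0 hmono hβ, kstep,
    intervalIntegral.integral_sub intervalIntegrable_const hF, intervalIntegral.integral_const,
    smul_eq_mul, mul_one]

theorem kstep_sub_qweight_self {tp : ℕ → ℝ} {n : ℕ} (hn : 1 ≤ n)
    (ht0 : tp 0 = 0) (htp : StrictMonoOn tp (Set.Iic n))
    (hβ : IntervalIntegrable β volume 0 (tp n)) :
    kstep tp n - qweight β tp n n
      = kstep tp n * etaAvg β tp n + ∑ j ∈ Ico 1 n, qweight β tp n j := by
  rw [etaAvg, if_neg (by omega), mul_inv_cancel_left₀ (kstep_pos hn htp).ne',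
    integral_etaFun_eq_kstep_sub_sum_qweight ht0 htp.monotoneOn hβ,
    ← Ico_add_one_right_eq_Icc, sum_Ico_succ_top hn]
  ring

end Quadrature

theorem dG0_energy_identity_weak_general
    {H : Type*} [NormedAddCommGroup H] [InnerProductSpace ℝ H]
    (N : ℕ) (tp : ℕ → ℝ) (ht0 : tp 0 = 0)
    (htmono : ∀ n < N, tp n < tp (n + 1))
    (β : ℝ → ℝ) (γ : ℝ) (hγ0 : 0 < γ)
    (hβγ : ∫ s in Set.Ioi (0:ℝ), β s = γ)
    (ρ : ℝ)
    (A sqrtA invSqrtA : H →L[ℝ] H)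
    (hsqrtAsym : ∀ x y : H, ⟪sqrtA x, y⟫ = ⟪x, sqrtA y⟫)
    (hsqrtA : ∀ x : H, sqrtA (sqrtA x) = A x)
    (hinv : ∀ x : H, sqrtA (invSqrtA x) = x)
    (hinv' : ∀ x : H, invSqrtA (sqrtA x) = x)
    (u0 v0 : H) (f1 f2 : ℝ → H)
    (U1 U2 : ℕ → H) (hU10 : U1 0 = u0) (hU20 : U2 0 = v0)
    (hscheme1 : ∀ n : ℕ, 1 ≤ n → n ≤ N →
      U1 n - U1 (n - 1) = kstep tp n • U2 n + kstep tp n • iavg tp f1 n)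
    (hscheme2 : ∀ n : ℕ, 1 ≤ n → n ≤ N →
      ρ • (U2 n - U2 (n - 1)) + (kstep tp n - qweight β tp n n) • A (U1 n)
          - ∑ j ∈ Finset.Ico 1 n, qweight β tp n j • A (U1 j)
        = kstep tp n • iavg tp f2 n) :
    etaAvg β tp N * ‖U1 N‖ ^ 2 + ρ * ‖invSqrtA (U2 N)‖ ^ 2
      + ∑ n ∈ Finset.Icc 1 N, kstep tp n *
          (-((etaAvg β tp n - etaAvg β tp (n - 1)) / kstep tp n) * ‖U1 (n - 1)‖ ^ 2
            + kstep tp n * etaAvg β tp n * ‖(kstep tp n)⁻¹ • (U1 n - U1 (n - 1))‖ ^ 2)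
      + ∑ n ∈ Finset.Icc 2 N, ∑ j ∈ Finset.Ico 1 n, qweight β tp n j *
          ((‖U1 n - U1 j‖ ^ 2 - ‖U1 (n - 1) - U1 j‖ ^ 2) / kstep tp n
            + kstep tp n * ‖(kstep tp n)⁻¹ • ((U1 n - U1 j) - (U1 (n - 1) - U1 j))‖ ^ 2)
      + ρ * ∑ n ∈ Finset.Icc 1 N, ‖invSqrtA (U2 n - U2 (n - 1))‖ ^ 2
    = ‖u0‖ ^ 2 + ρ * ‖invSqrtA v0‖ ^ 2
      + 2 * ∑ n ∈ Finset.Icc 1 N, kstep tp n * etaAvg β tp n * ⟪iavg tp f1 n, U1 n⟫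
      + 2 * ∑ n ∈ Finset.Icc 1 N, kstep tp n * ⟪invSqrtA (iavg tp f2 n), invSqrtA (U2 n)⟫
      + 2 * ∑ n ∈ Finset.Icc 2 N, ∑ j ∈ Finset.Ico 1 n,
          qweight β tp n j * ⟪iavg tp f1 n, U1 n - U1 j⟫ := by
  have hβ_int : IntegrableOn β (Set.Ioi 0) := by
    -- otherwise the Bochner integral would be `0 ≠ γ`
    by_contra h
    exact hγ0.ne (integral_undef h ▸ hβγ)
  have hBA := inner_invSqrt_apply_invSqrt_apply hsqrtAsym hsqrtA hinv hinv'
  have h_energy := add_sum_Icc_eq_of_sub_pred_add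
    (E := fun m => etaAvg β tp m * ‖U1 m‖ ^ 2 + ρ * ‖invSqrtA (U2 m)‖ ^ 2) fun n hn => by
      obtain ⟨hn₁, hnN⟩ := mem_Icc.1 hn
      have htp : StrictMonoOn tp (Set.Iic n) :=
        (strictMonoOn_Iic_of_lt_succ htmono).mono (Set.Iic_subset_Iic.2 hnN)
      have hβ : IntervalIntegrable β volume 0 (tp n) :=
        (intervalIntegrable_iff_integrableOn_Ioc_of_le (ht0 ▸ htp.monotoneOn
          (Set.mem_Iic.2 (Nat.zero_le n)) (Set.mem_Iic.2 le_rfl) (Nat.zero_le n))).2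
          (hβ_int.mono_set Set.Ioc_subset_Ioi_self)
      exact dG0_step_energy (Ico 1 n) A invSqrtA hBA (qweight β tp n) (kstep_pos hn₁ htp).ne'
        (kstep_sub_qweight_self hn₁ ht0 htp hβ) U1 (hscheme1 n hn₁ hnN) (hscheme2 n hn₁ hnN)
  have h_eta0 : etaAvg β tp 0 = 1 := if_pos rfl
  simp only [sum_add_distrib, ← mul_sum, h_eta0, hU10, hU20, one_mul] at h_energy
  rw [← sum_Icc_one_eq_sum_Icc_two, ← sum_Icc_one_eq_sum_Icc_two]
  linear_combination h_energy

/-- Energy identity for the dG(0) scheme (Theorem 4.1, case `l = −1`).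
Here `sqrtA` is the positive square root `A^{1/2}` of `A` and `invSqrtA = A^{−1/2}`
is its inverse. -/
theorem dG0_energy_identity_weak
    {H : Type*} [NormedAddCommGroup H] [InnerProductSpace ℝ H] [CompleteSpace H]
    (N : ℕ) (hN : 1 ≤ N) (tp : ℕ → ℝ) (ht0 : tp 0 = 0)
    (htmono : ∀ n < N, tp n < tp (n + 1))
    (β : ℝ → ℝ) (γ : ℝ) (hγ0 : 0 < γ) (hγ1 : γ < 1)
    (hβnonneg : ∀ s ∈ Set.Ioi (0:ℝ), 0 ≤ β s)
    (hβmono : AntitoneOn β (Set.Ioi 0))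
    (hβint : LocallyIntegrableOn β (Set.Ioi 0))
    (hβγ : ∫ s in Set.Ioi (0:ℝ), β s = γ)
    (ρ : ℝ) (hρ : 0 < ρ)
    (A sqrtA invSqrtA : H →L[ℝ] H)
    (hAsym : ∀ x y : H, ⟪A x, y⟫ = ⟪x, A y⟫)
    (hApos : ∃ c > 0, ∀ x : H, c * ‖x‖ ^ 2 ≤ ⟪A x, x⟫)
    (hsqrtAsym : ∀ x y : H, ⟪sqrtA x, y⟫ = ⟪x, sqrtA y⟫)
    (hsqrtApos : ∀ x : H, 0 ≤ ⟪sqrtA x, x⟫)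
    (hsqrtA : ∀ x : H, sqrtA (sqrtA x) = A x)
    (hinv : ∀ x : H, sqrtA (invSqrtA x) = x)
    (hinv' : ∀ x : H, invSqrtA (sqrtA x) = x)
    (u0 v0 : H) (f1 f2 : ℝ → H)
    (hf1 : IntegrableOn f1 (Set.Icc 0 (tp N)))
    (hf2 : IntegrableOn f2 (Set.Icc 0 (tp N)))
    (U1 U2 : ℕ → H) (hU10 : U1 0 = u0) (hU20 : U2 0 = v0)
    (hscheme1 : ∀ n : ℕ, 1 ≤ n → n ≤ N →
      U1 n - U1 (n - 1) = kstep tp n • U2 n + kstep tp n • iavg tp f1 n)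
    (hscheme2 : ∀ n : ℕ, 1 ≤ n → n ≤ N →
      ρ • (U2 n - U2 (n - 1)) + (kstep tp n - qweight β tp n n) • A (U1 n)
          - ∑ j ∈ Finset.Ico 1 n, qweight β tp n j • A (U1 j)
        = kstep tp n • iavg tp f2 n) :
    etaAvg β tp N * ‖U1 N‖ ^ 2 + ρ * ‖invSqrtA (U2 N)‖ ^ 2
      + ∑ n ∈ Finset.Icc 1 N, kstep tp n *
          (-((etaAvg β tp n - etaAvg β tp (n - 1)) / kstep tp n) * ‖U1 (n - 1)‖ ^ 2
            + kstep tp n * etaAvg β tp n * ‖(kstep tp n)⁻¹ • (U1 n - U1 (n - 1))‖ ^ 2)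
      + ∑ n ∈ Finset.Icc 2 N, ∑ j ∈ Finset.Ico 1 n, qweight β tp n j *
          ((‖U1 n - U1 j‖ ^ 2 - ‖U1 (n - 1) - U1 j‖ ^ 2) / kstep tp n
            + kstep tp n * ‖(kstep tp n)⁻¹ • ((U1 n - U1 j) - (U1 (n - 1) - U1 j))‖ ^ 2)
      + ρ * ∑ n ∈ Finset.Icc 1 N, ‖invSqrtA (U2 n - U2 (n - 1))‖ ^ 2
    = ‖u0‖ ^ 2 + ρ * ‖invSqrtA v0‖ ^ 2
      + 2 * ∑ n ∈ Finset.Icc 1 N, kstep tp n * etaAvg β tp n * ⟪iavg tp f1 n, U1 n⟫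
      + 2 * ∑ n ∈ Finset.Icc 1 N, kstep tp n * ⟪invSqrtA (iavg tp f2 n), invSqrtA (U2 n)⟫
      + 2 * ∑ n ∈ Finset.Icc 2 N, ∑ j ∈ Finset.Ico 1 n,
          qweight β tp n j * ⟪iavg tp f1 n, U1 n - U1 j⟫ :=
  dG0_energy_identity_weak_general N tp ht0 htmono β γ hγ0 hβγ ρ A sqrtA invSqrtA hsqrtAsym hsqrtA
    hinv hinv' u0 v0 f1 f2 U1 U2 hU10 hU20 hscheme1 hscheme2
end
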